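/- Let ψ : ℝ⁴ × ℝ⁴ → ℝ be C¹ and define ψ_*(u,ω) = ψ(U(u), S(u,ω)) with U = (√(1+|u|²), u), S = (σω·u, σ(ω + (ω·u)u/(1+u⁰))). Let A, B : ℝ⁸ → ℝ⁴ satisfy η(A,U) = 0, η(A,S) + η(B,U) = 0, η(B,S) = 0 on the constraint surface. Then Aᵘ(∂_{uᵘ}ψ)_* + Bᵛ(∂_{sᵛ}ψ)_* = Aⁱ∂_{uⁱ}ψ_* + (1/σ)(√𝔥)ᵢʲ(Bⁱ − (s⁰/(1+u⁰))Aⁱ) ∂̸_{ωʲ}ψ_* − ((√𝔥)ᵢₖAⁱωᵏ/(u⁰(1+u⁰))) uʲ ∂̸_{ωʲ}ψ_*. -/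

import Mathlib

/-!
Write `ψ_* = Ψ ∘ Φ` with `Φ(u, ω) = (U(u), S(u, ω))`. By the chain rule both sides are `DΨ(U, S)`
applied to a vector: `(A, B)` on the left; on the right, the `u`-derivatives contracted with the
spatial part `a` of `A` give `DΦ(a, 0)`, and, `S(u, ·)` being linear, the projected `ω`-derivatives
contracted with the coefficient vector `w` give `(0, S(u, w - (w·ω)ω))`. It remains to check
`(A, B) = DΦ(a, 0) + (0, S(u, w))` and `w·ω = 0`, which is algebra on the constraint surface:
`η(A, U) = 0` determines `A⁰`, `η(A, S) + η(B, U) = 0` determines `B⁰`, and then `η(B, S) = 0`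
gives `w·ω = 0`.
-/

open Finset Matrix

/-- Minkowski inner product on ℝ⁴ (index 0 timelike). -/
def etaP (X Y : Fin 4 → ℝ) : ℝ := -(X 0 * Y 0) + ∑ i : Fin 3, X i.succ * Y i.succ

lemma etaP_eq (X Y : Fin 4 → ℝ) : etaP X Y = -(X 0 * Y 0) + Fin.tail X ⬝ᵥ Fin.tail Y := rfl

section chainRule

variable {𝕜 E F G : Type*} [NontriviallyNormedField 𝕜] [NormedAddCommGroup E] [NormedSpace 𝕜 E]
  [NormedAddCommGroup F] [NormedSpace 𝕜 F] [NormedAddCommGroup G] [NormedSpace 𝕜 G]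

lemma fderiv_comp_apply_of_hasLineDerivAt {f : F → G} {Φ : E → F} {x v : E} {w : F}
    (hf : DifferentiableAt 𝕜 f (Φ x)) (hΦ : DifferentiableAt 𝕜 Φ x)
    (h : HasLineDerivAt 𝕜 Φ w x v) :
    fderiv 𝕜 (fun y => f (Φ y)) x v = fderiv 𝕜 f (Φ x) w := by
  rw [fderiv_fun_comp x hf hΦ, ContinuousLinearMap.comp_apply,
    (hΦ.hasFDerivAt.hasLineDerivAt v).unique h]

lemma fderiv_partial_left_apply {ψ : E → F → G} {x : E} {y : F}
    (hψ : DifferentiableAt 𝕜 (fun p : E × F => ψ p.1 p.2) (x, y)) (v : E) :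
    fderiv 𝕜 (fun x' => ψ x' y) x v = fderiv 𝕜 (fun p : E × F => ψ p.1 p.2) (x, y) (v, 0) :=
  fderiv_comp_apply_of_hasLineDerivAt (Φ := fun x' => (x', y)) hψ (by fun_prop)
    (by simpa using ((hasFDerivAt_id (𝕜 := 𝕜) x).prodMk (hasFDerivAt_const y x)).hasLineDerivAt v)

lemma fderiv_partial_right_apply {ψ : E → F → G} {x : E} {y : F}
    (hψ : DifferentiableAt 𝕜 (fun p : E × F => ψ p.1 p.2) (x, y)) (w : F) :
    fderiv 𝕜 (fun y' => ψ x y') y w = fderiv 𝕜 (fun p : E × F => ψ p.1 p.2) (x, y) (0, w) :=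
  fderiv_comp_apply_of_hasLineDerivAt (Φ := fun y' => (x, y')) hψ (by fun_prop)
    (by simpa using ((hasFDerivAt_const x y).prodMk (hasFDerivAt_id (𝕜 := 𝕜) y)).hasLineDerivAt w)

end chainRule

section coordinates

variable {ι : Type*} [Fintype ι]

lemma sum_mul_apply_single [DecidableEq ι] (f : (ι → ℝ) →L[ℝ] ℝ) (a : ι → ℝ) :
    ∑ i, a i * f (Pi.single i 1) = f a := by
  conv_rhs => rw [pi_eq_sum_univ' a]
  simp [map_sum, map_smul]

lemma sum_sum_mul_mul_eq_vecMul_dotProduct (M : Matrix ι ι ℝ) (y d : ι → ℝ) :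
    ∑ i, ∑ j, M i j * y i * d j = (y ᵥ* M) ⬝ᵥ d := by
  rw [sum_comm]
  simp only [dotProduct, vecMul, ← sum_mul]
  exact sum_congr rfl fun j _ => congrArg (· * d j) (sum_congr rfl fun i _ => mul_comm _ _)

lemma sum_mul_sum_tangentProjection_mul [DecidableEq ι] (f : (ι → ℝ) →L[ℝ] ℝ) (z ω : ι → ℝ) :
    ∑ j, z j * ∑ l, ((if j = l then 1 else 0) - ω j * ω l) * f (Pi.single l 1) =
      f (z - (z ⬝ᵥ ω) • ω) := by
  rw [← sum_mul_apply_single f]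
  simp only [mul_sum, ← mul_assoc]
  rw [sum_comm]
  refine sum_congr rfl fun l _ => ?_
  rw [← sum_mul]
  congr 1
  simp [mul_sub, sum_sub_distrib, dotProduct, sum_mul, mul_assoc]

end coordinates

noncomputable section

def lorentzFactor (u : Fin 3 → ℝ) : ℝ := √(1 + ∑ k, u k ^ 2)

def fourVelocity (u : Fin 3 → ℝ) : Fin 4 → ℝ := Fin.cons (lorentzFactor u) u

def spinVector (σ : ℝ) (u ω : Fin 3 → ℝ) : Fin 4 → ℝ :=
  Fin.cons (σ * (ω ⬝ᵥ u)) (σ • (ω + ((ω ⬝ᵥ u) / (1 + lorentzFactor u)) • u))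

def fourVelocityLineDeriv (u v : Fin 3 → ℝ) : Fin 4 → ℝ :=
  Fin.cons ((u ⬝ᵥ v) / lorentzFactor u) v

def spinVectorLineDeriv (σ : ℝ) (u ω v : Fin 3 → ℝ) : Fin 4 → ℝ :=
  Fin.cons (σ * (ω ⬝ᵥ v))
    (σ • (((ω ⬝ᵥ v) / (1 + lorentzFactor u) -
        (ω ⬝ᵥ u) * ((u ⬝ᵥ v) / lorentzFactor u) / (1 + lorentzFactor u) ^ 2) • u +
      ((ω ⬝ᵥ u) / (1 + lorentzFactor u)) • v))

def sqrtH (u : Fin 3 → ℝ) : Matrix (Fin 3) (Fin 3) ℝ :=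
  of fun i j => (if i = j then 1 else 0) - u i * u j / (lorentzFactor u * (1 + lorentzFactor u))

/-- The `ω`-component `w` of the tangent vector `(A, B) = DΦ (Fin.tail A, w)`, in the paper's form. -/
def sphereComponent (σ : ℝ) (u ω : Fin 3 → ℝ) (A B : Fin 4 → ℝ) : Fin 3 → ℝ :=
  σ⁻¹ • ((Fin.tail B - (σ * (ω ⬝ᵥ u) / (1 + lorentzFactor u)) • Fin.tail A) ᵥ* sqrtH u) -
    ((Fin.tail A ᵥ* sqrtH u) ⬝ᵥ ω / (lorentzFactor u * (1 + lorentzFactor u))) • u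

end

section lorentzFactor

lemma lorentzFactor_eq_sqrt (u : Fin 3 → ℝ) : lorentzFactor u = √(1 + u ⬝ᵥ u) := by
  simp only [lorentzFactor, dotProduct, sq]

lemma one_add_dotProduct_self_pos (u : Fin 3 → ℝ) : 0 < 1 + u ⬝ᵥ u := by
  have := dotProduct_self_star_nonneg u
  positivity

lemma lorentzFactor_pos (u : Fin 3 → ℝ) : 0 < lorentzFactor u := by
  rw [lorentzFactor_eq_sqrt]
  exact Real.sqrt_pos.mpr (one_add_dotProduct_self_pos u)

lemma one_add_lorentzFactor_ne_zero (u : Fin 3 → ℝ) : 1 + lorentzFactor u ≠ 0 :=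
  (add_pos one_pos (lorentzFactor_pos u)).ne'

lemma dotProduct_self_eq_lorentzFactor_sq_sub_one (u : Fin 3 → ℝ) :
    u ⬝ᵥ u = lorentzFactor u ^ 2 - 1 := by
  rw [lorentzFactor_eq_sqrt, Real.sq_sqrt (one_add_dotProduct_self_pos u).le]
  ring

@[fun_prop]
lemma differentiable_lorentzFactor : Differentiable ℝ lorentzFactor := fun u => by
  have : 1 + ∑ k, u k ^ 2 ≠ 0 := by positivity
  unfold lorentzFactor
  fun_prop (disch := assumption)

lemma hasLineDerivAt_lorentzFactor (u v : Fin 3 → ℝ) :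
    HasLineDerivAt ℝ lorentzFactor ((u ⬝ᵥ v) / lorentzFactor u) u v := by
  have hq : HasDerivAt (fun t : ℝ => 1 + (u + t • v) ⬝ᵥ (u + t • v)) (2 * (u ⬝ᵥ v)) 0 := by
    have h : (fun t : ℝ => 1 + (u + t • v) ⬝ᵥ (u + t • v)) =
        fun t => 1 + u ⬝ᵥ u + t * (2 * (u ⬝ᵥ v)) + t ^ 2 * (v ⬝ᵥ v) := by
      funext t
      simp only [dotProduct_add, add_dotProduct, dotProduct_smul, smul_dotProduct, smul_eq_mul,
        dotProduct_comm v u]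
      ring
    rw [h]
    simpa using (((hasDerivAt_id (0 : ℝ)).mul_const _).const_add _).fun_add
      ((hasDerivAt_pow 2 (0 : ℝ)).mul_const (v ⬝ᵥ v))
  have hs := hq.sqrt (by simpa using (one_add_dotProduct_self_pos u).ne')
  simp only [zero_smul, add_zero] at hs
  unfold HasLineDerivAt
  simp only [lorentzFactor_eq_sqrt]
  exact hs.congr_deriv (mul_div_mul_left _ _ two_ne_zero)

end lorentzFactor

section parametrization

lemma differentiable_fourVelocity : Differentiable ℝ fourVelocity := fun u => by
  unfold fourVelocity
  fun_prop

lemma differentiable_spinVector (σ : ℝ) :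
    Differentiable ℝ fun p : (Fin 3 → ℝ) × (Fin 3 → ℝ) => spinVector σ p.1 p.2 := fun p => by
  have := one_add_lorentzFactor_ne_zero p.1
  unfold spinVector
  simp only [dotProduct]
  fun_prop (disch := assumption)

lemma hasLineDerivAt_fourVelocity (u v : Fin 3 → ℝ) :
    HasLineDerivAt ℝ fourVelocity (fourVelocityLineDeriv u v) u v :=
  HasDerivAt.finCons (hasLineDerivAt_lorentzFactor u v) ((hasFDerivAt_id u).hasLineDerivAt v)

lemma hasLineDerivAt_spinVector_left (σ : ℝ) (u ω v : Fin 3 → ℝ) :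
    HasLineDerivAt ℝ (spinVector σ · ω) (spinVectorLineDeriv σ u ω v) u v := by
  have hdot : HasLineDerivAt ℝ (ω ⬝ᵥ ·) (ω ⬝ᵥ v) u v := by
    unfold HasLineDerivAt
    simp only [dotProduct_add, dotProduct_smul, smul_eq_mul]
    simpa using ((hasDerivAt_id (0 : ℝ)).mul_const (ω ⬝ᵥ v)).const_add (ω ⬝ᵥ u)
  have hr1 := one_add_lorentzFactor_ne_zero u
  have hcoeff := hdot.div ((hasLineDerivAt_lorentzFactor u v).const_add 1) (by simpa using hr1)
  refine HasDerivAt.finCons (hdot.const_mul σ) <|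
    (((hcoeff.smul ((hasFDerivAt_id u).hasLineDerivAt v)).const_add ω).const_smul σ).congr_deriv ?_
  simp only [zero_smul, add_zero, Pi.div_apply, id, ContinuousLinearMap.id_apply]
  rw [add_comm]
  congr 3
  field_simp

lemma spinVector_add_smul (σ : ℝ) (u ω w : Fin 3 → ℝ) (t : ℝ) :
    spinVector σ u (ω + t • w) = spinVector σ u ω + t • spinVector σ u w := by
  ext μ
  refine Fin.cases ?_ (fun i => ?_) μ <;>
    simp only [spinVector, Pi.add_apply, Pi.smul_apply, Fin.cons_zero, Fin.cons_succ,
      add_dotProduct, smul_dotProduct, smul_eq_mul] <;>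
    ring

lemma hasLineDerivAt_spinVector_right (σ : ℝ) (u ω w : Fin 3 → ℝ) :
    HasLineDerivAt ℝ (spinVector σ u) (spinVector σ u w) ω w := by
  unfold HasLineDerivAt
  simp only [spinVector_add_smul]
  simpa using ((hasDerivAt_id (0 : ℝ)).smul_const (spinVector σ u w)).const_add (spinVector σ u ω)

variable {ψ : (Fin 4 → ℝ) → (Fin 4 → ℝ) → ℝ} {σ : ℝ} {u ω : Fin 3 → ℝ}

lemma fderiv_comp_fourVelocity_apply
    (hψ : DifferentiableAt ℝ (fun p : (Fin 4 → ℝ) × (Fin 4 → ℝ) => ψ p.1 p.2)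
      (fourVelocity u, spinVector σ u ω)) (v : Fin 3 → ℝ) :
    fderiv ℝ (fun w => ψ (fourVelocity w) (spinVector σ w ω)) u v =
      fderiv ℝ (fun p : (Fin 4 → ℝ) × (Fin 4 → ℝ) => ψ p.1 p.2) (fourVelocity u, spinVector σ u ω)
        (fourVelocityLineDeriv u v, spinVectorLineDeriv σ u ω v) :=
  fderiv_comp_apply_of_hasLineDerivAt (Φ := fun w => (fourVelocity w, spinVector σ w ω)) hψ
    ((differentiable_fourVelocity u).prodMk
      ((differentiable_spinVector σ).comp (differentiable_id.prodMk (differentiable_const ω)) u))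
    ((hasLineDerivAt_fourVelocity u v).prodMk (hasLineDerivAt_spinVector_left σ u ω v))

lemma fderiv_comp_spinVector_apply
    (hψ : DifferentiableAt ℝ (fun p : (Fin 4 → ℝ) × (Fin 4 → ℝ) => ψ p.1 p.2)
      (fourVelocity u, spinVector σ u ω)) (w : Fin 3 → ℝ) :
    fderiv ℝ (fun o => ψ (fourVelocity u) (spinVector σ u o)) ω w =
      fderiv ℝ (fun p : (Fin 4 → ℝ) × (Fin 4 → ℝ) => ψ p.1 p.2) (fourVelocity u, spinVector σ u ω)
        (0, spinVector σ u w) :=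
  fderiv_comp_apply_of_hasLineDerivAt (Φ := fun o => (fourVelocity u, spinVector σ u o)) hψ
    ((differentiableAt_const _).prodMk
      ((differentiable_spinVector σ).comp ((differentiable_const u).prodMk differentiable_id) ω))
    ((hasDerivAt_const _ _).prodMk (hasLineDerivAt_spinVector_right σ u ω w))

end parametrization

section sqrtH

lemma vecMul_sqrtH (u v : Fin 3 → ℝ) :
    v ᵥ* sqrtH u = v - ((u ⬝ᵥ v) / (lorentzFactor u * (1 + lorentzFactor u))) • u := by
  ext j
  simp only [vecMul, dotProduct, sqrtH, of_apply, Pi.sub_apply, Pi.smul_apply, smul_eq_mul,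
    mul_sub, sum_sub_distrib, mul_ite, mul_one, mul_zero, sum_ite_eq', mem_univ, if_true, sum_mul,
    sum_div]
  congr 1
  refine sum_congr rfl fun i _ => ?_
  ring

lemma sum_sqrtH_mul_sub_sum_eq_sphereComponent_dotProduct (σ : ℝ) (u ω : Fin 3 → ℝ)
    (A B : Fin 4 → ℝ) (d : Fin 3 → ℝ) :
    (1 / σ) * (∑ i, ∑ j, sqrtH u i j *
        (B i.succ - (σ * (ω ⬝ᵥ u) / (1 + lorentzFactor u)) * A i.succ) * d j) -
      ∑ j, ((∑ i, ∑ k, sqrtH u i k * A i.succ * ω k) /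
        (lorentzFactor u * (1 + lorentzFactor u))) * u j * d j =
      sphereComponent σ u ω A B ⬝ᵥ d := by
  rw [sum_sum_mul_mul_eq_vecMul_dotProduct, sum_sum_mul_mul_eq_vecMul_dotProduct,
    sphereComponent, sub_dotProduct, smul_dotProduct, smul_dotProduct, smul_eq_mul, smul_eq_mul,
    one_div]
  simp only [dotProduct, mul_sum, mul_assoc]
  rfl

end sqrtH

section constraints

variable {σ : ℝ} {u ω : Fin 3 → ℝ} {A B : Fin 4 → ℝ}

lemma eq_fourVelocityLineDeriv_of_etaP_eq_zero (h : etaP A (fourVelocity u) = 0) :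
    A = fourVelocityLineDeriv u (Fin.tail A) := by
  conv_lhs => rw [← Fin.cons_self_tail A]
  congr 1
  rw [eq_div_iff (lorentzFactor_pos u).ne', dotProduct_comm]
  rw [etaP_eq] at h
  exact neg_add_eq_zero.mp h

lemma tail_dotProduct_eq_of_etaP_spinVector_eq_zero (hσ : σ ≠ 0)
    (hBS : etaP B (spinVector σ u ω) = 0) :
    Fin.tail B ⬝ᵥ ω = (ω ⬝ᵥ u) * (B 0 - (Fin.tail B ⬝ᵥ u) / (1 + lorentzFactor u)) := by
  simp only [etaP_eq, spinVector, Fin.cons_zero, Fin.tail_cons, dotProduct_add,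
    dotProduct_smul, smul_eq_mul] at hBS
  have h : σ * (Fin.tail B ⬝ᵥ ω -
      (ω ⬝ᵥ u) * (B 0 - (Fin.tail B ⬝ᵥ u) / (1 + lorentzFactor u))) = 0 := by
    linear_combination hBS
  exact sub_eq_zero.mp ((mul_eq_zero.mp h).resolve_left hσ)

lemma timeComponent_eq_of_etaP_eq_zero (hAU : etaP A (fourVelocity u) = 0)
    (hAS : etaP A (spinVector σ u ω) + etaP B (fourVelocity u) = 0) :
    B 0 = (σ * (Fin.tail A ⬝ᵥ ω) -
      σ * (ω ⬝ᵥ u) * (Fin.tail A ⬝ᵥ u) / (lorentzFactor u * (1 + lorentzFactor u)) +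
      Fin.tail B ⬝ᵥ u) / lorentzFactor u := by
  have hr := (lorentzFactor_pos u).ne'
  have hr1 := one_add_lorentzFactor_ne_zero u
  have hA0 : A 0 = Fin.tail A ⬝ᵥ u / lorentzFactor u := by
    rw [dotProduct_comm]
    exact congr_fun (eq_fourVelocityLineDeriv_of_etaP_eq_zero hAU) 0
  simp only [etaP_eq, fourVelocity, spinVector, Fin.cons_zero, Fin.tail_cons, dotProduct_add,
    dotProduct_smul, smul_eq_mul, hA0] at hAS
  field_simp at hAS ⊢
  linear_combination -hAS

lemma sphereComponent_dotProduct_eq_zero (hσ : σ ≠ 0) (hAU : etaP A (fourVelocity u) = 0)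
    (hAS : etaP A (spinVector σ u ω) + etaP B (fourVelocity u) = 0)
    (hBS : etaP B (spinVector σ u ω) = 0) :
    sphereComponent σ u ω A B ⬝ᵥ ω = 0 := by
  have hr := (lorentzFactor_pos u).ne'
  have hr1 := one_add_lorentzFactor_ne_zero u
  simp only [sphereComponent, vecMul_sqrtH, sub_dotProduct, smul_dotProduct, smul_eq_mul,
    dotProduct_comm u, tail_dotProduct_eq_of_etaP_spinVector_eq_zero hσ hBS,
    timeComponent_eq_of_etaP_eq_zero hAU hAS]
  field_simp
  ring

lemma eq_spinVectorLineDeriv_add_spinVector (hσ : σ ≠ 0) (hAU : etaP A (fourVelocity u) = 0)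
    (hAS : etaP A (spinVector σ u ω) + etaP B (fourVelocity u) = 0) :
    B = spinVectorLineDeriv σ u ω (Fin.tail A) + spinVector σ u (sphereComponent σ u ω A B) := by
  have hr := (lorentzFactor_pos u).ne'
  have hr1 := one_add_lorentzFactor_ne_zero u
  ext μ
  refine Fin.cases ?_ (fun i => ?_) μ
  · simp only [spinVectorLineDeriv, spinVector, sphereComponent, vecMul_sqrtH, Pi.add_apply,
      Fin.cons_zero, sub_dotProduct, smul_dotProduct, smul_eq_mul, dotProduct_comm u,
      dotProduct_comm ω (Fin.tail A), dotProduct_self_eq_lorentzFactor_sq_sub_one,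
      timeComponent_eq_of_etaP_eq_zero hAU hAS]
    field_simp
    ring
  · simp only [spinVectorLineDeriv, spinVector, sphereComponent, vecMul_sqrtH, Pi.add_apply,
      Fin.cons_succ, Pi.sub_apply, Pi.smul_apply, sub_dotProduct, smul_dotProduct, smul_eq_mul,
      dotProduct_comm u, dotProduct_comm ω (Fin.tail A),
      dotProduct_self_eq_lorentzFactor_sq_sub_one, Fin.tail]
    field_simp
    ring

end constraints

theorem chain_rule_spin_general (σ : ℝ) (hσ0 : 0 < σ)
    (ψ : (Fin 4 → ℝ) → (Fin 4 → ℝ) → ℝ)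
    (hψ : ContDiff ℝ 1 (fun p : (Fin 4 → ℝ) × (Fin 4 → ℝ) => ψ p.1 p.2))
    (u ω : Fin 3 → ℝ) (A B : Fin 4 → ℝ) :
    let u0 : ℝ := Real.sqrt (1 + ∑ i, u i ^ 2)
    let s0 : ℝ := σ * ∑ i, ω i * u i
    let s : Fin 3 → ℝ := fun i => σ * (ω i + ((∑ j, ω j * u j) / (1 + u0)) * u i)
    let U : Fin 4 → ℝ := Fin.cons u0 u
    let S : Fin 4 → ℝ := Fin.cons s0 s
    let sqh : Fin 3 → Fin 3 → ℝ := fun i j =>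
      (if i = j then 1 else 0) - u i * u j / (u0 * (1 + u0))
    let ψst : (Fin 3 → ℝ) → (Fin 3 → ℝ) → ℝ := fun w o =>
      ψ (Fin.cons (Real.sqrt (1 + ∑ k, w k ^ 2)) w)
        (Fin.cons (σ * ∑ k, o k * w k) fun i =>
          σ * (o i + ((∑ j, o j * w j) / (1 + Real.sqrt (1 + ∑ k, w k ^ 2))) * w i))
    let Du : Fin 3 → ℝ := fun i => fderiv ℝ (fun w => ψst w ω) u (Pi.single i 1)
    let Dom : Fin 3 → ℝ := fun j =>
      ∑ l, ((if j = l then (1 : ℝ) else 0) - ω j * ω l) *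
        fderiv ℝ (fun o => ψst u o) ω (Pi.single l 1)
    etaP A U = 0 → etaP A S + etaP B U = 0 → etaP B S = 0 →
      (∑ μ, A μ * fderiv ℝ (fun x => ψ x S) U (Pi.single μ 1)) +
          (∑ ν, B ν * fderiv ℝ (fun y => ψ U y) S (Pi.single ν 1)) =
        (∑ i, A i.succ * Du i) +
          (1 / σ) * (∑ i, ∑ j, sqh i j * (B i.succ - (s0 / (1 + u0)) * A i.succ) * Dom j) -
          ∑ j, ((∑ i, ∑ k, sqh i k * A i.succ * ω k) / (u0 * (1 + u0))) * u j * Dom j := by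
  intro u0 s0 s U S sqh ψst Du Dom hAU hAS hBS
  have hΨ : DifferentiableAt ℝ (fun p : (Fin 4 → ℝ) × (Fin 4 → ℝ) => ψ p.1 p.2) (U, S) :=
    hψ.differentiable one_ne_zero _
  set D := fderiv ℝ (fun p : (Fin 4 → ℝ) × (Fin 4 → ℝ) => ψ p.1 p.2) (U, S)
  set z := sphereComponent σ u ω A B
  have hLHS : (∑ μ, A μ * fderiv ℝ (fun x => ψ x S) U (Pi.single μ 1)) +
      (∑ ν, B ν * fderiv ℝ (fun y => ψ U y) S (Pi.single ν 1)) = D (A, B) := by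
    rw [sum_mul_apply_single, sum_mul_apply_single, fderiv_partial_left_apply hΨ,
      fderiv_partial_right_apply hΨ, ← map_add, Prod.mk_add_mk, add_zero, zero_add]
  have hDu : ∑ i, A i.succ * Du i =
      D (fourVelocityLineDeriv u (Fin.tail A), spinVectorLineDeriv σ u ω (Fin.tail A)) :=
    (sum_mul_apply_single _ _).trans (fderiv_comp_fourVelocity_apply hΨ _)
  have hDom : ∑ j, z j * Dom j = D (0, spinVector σ u z) := by
    rw [sum_mul_sum_tangentProjection_mul, sphereComponent_dotProduct_eq_zero hσ0.ne' hAU hAS hBS,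
      zero_smul, sub_zero]
    exact fderiv_comp_spinVector_apply hΨ z
  have hcoeff :
      (1 / σ) * (∑ i, ∑ j, sqh i j * (B i.succ - (s0 / (1 + u0)) * A i.succ) * Dom j) -
        ∑ j, ((∑ i, ∑ k, sqh i k * A i.succ * ω k) / (u0 * (1 + u0))) * u j * Dom j =
        ∑ j, z j * Dom j :=
    sum_sqrtH_mul_sub_sum_eq_sphereComponent_dotProduct σ u ω A B Dom
  rw [hLHS, add_sub_assoc, hcoeff, hDu, hDom, ← map_add, Prod.mk_add_mk, add_zero,
    ← eq_fourVelocityLineDeriv_of_etaP_eq_zero hAU,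
    ← eq_spinVectorLineDeriv_add_spinVector hσ0.ne' hAU hAS]

/-- Chain rule (Lemma 1 of the paper): for `ψ = ψ(u,s)` restricted to the constraint
surface as `ψ_*(u,ω)`, and `A,B` satisfying `η(A,U) = 0`, `η(A,S) + η(B,U) = 0`,
`η(B,S) = 0`, one has
`Aᵘ(∂_{uᵘ}ψ)_* + Bᵛ(∂_{sᵛ}ψ)_* = Aⁱ∂_{uⁱ}ψ_*`
`+ (1/σ)(√𝔥)ᵢʲ(Bⁱ − (s⁰/(1+u⁰))Aⁱ)∂̸_{ωʲ}ψ_* − ((√𝔥)ᵢₖAⁱωᵏ/(u⁰(1+u⁰))) uʲ∂̸_{ωʲ}ψ_*`. -/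
theorem chain_rule_spin (σ : ℝ) (hσ0 : 0 < σ) (hσ1 : σ ≠ 1)
    (ψ : (Fin 4 → ℝ) → (Fin 4 → ℝ) → ℝ)
    (hψ : ContDiff ℝ 1 (fun p : (Fin 4 → ℝ) × (Fin 4 → ℝ) => ψ p.1 p.2))
    (u ω : Fin 3 → ℝ) (hω : ∑ i, ω i ^ 2 = 1) (A B : Fin 4 → ℝ) :
    let u0 : ℝ := Real.sqrt (1 + ∑ i, u i ^ 2)
    let s0 : ℝ := σ * ∑ i, ω i * u i
    let s : Fin 3 → ℝ := fun i => σ * (ω i + ((∑ j, ω j * u j) / (1 + u0)) * u i)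
    let U : Fin 4 → ℝ := Fin.cons u0 u
    let S : Fin 4 → ℝ := Fin.cons s0 s
    let sqh : Fin 3 → Fin 3 → ℝ := fun i j =>
      (if i = j then 1 else 0) - u i * u j / (u0 * (1 + u0))
    let ψst : (Fin 3 → ℝ) → (Fin 3 → ℝ) → ℝ := fun w o =>
      ψ (Fin.cons (Real.sqrt (1 + ∑ k, w k ^ 2)) w)
        (Fin.cons (σ * ∑ k, o k * w k) fun i =>
          σ * (o i + ((∑ j, o j * w j) / (1 + Real.sqrt (1 + ∑ k, w k ^ 2))) * w i))
    let Du : Fin 3 → ℝ := fun i => fderiv ℝ (fun w => ψst w ω) u (Pi.single i 1)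
    let Dom : Fin 3 → ℝ := fun j =>
      ∑ l, ((if j = l then (1 : ℝ) else 0) - ω j * ω l) *
        fderiv ℝ (fun o => ψst u o) ω (Pi.single l 1)
    etaP A U = 0 → etaP A S + etaP B U = 0 → etaP B S = 0 →
      (∑ μ, A μ * fderiv ℝ (fun x => ψ x S) U (Pi.single μ 1)) +
          (∑ ν, B ν * fderiv ℝ (fun y => ψ U y) S (Pi.single ν 1)) =
        (∑ i, A i.succ * Du i) +
          (1 / σ) * (∑ i, ∑ j, sqh i j * (B i.succ - (s0 / (1 + u0)) * A i.succ) * Dom j) -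
          ∑ j, ((∑ i, ∑ k, sqh i k * A i.succ * ω k) / (u0 * (1 + u0))) * u j * Dom j :=
  chain_rule_spin_general σ hσ0 ψ hψ u ω A B
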